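/- arXiv:2411.10387 — 7 statements merged into one kernel-verified Lean document; each statement's English description precedes it below -/
import Mathlib

section
/- Let m, γ : {1,…,N} → ℝ with m_n > 0 and γ_n > 0 for all n, let B be a real N×L matrix, and let W be a real L×L diagonal matrix with strictly positive diagonal entries; set L₀ = B W Bᵀ. If λ ∈ ℂ and v ∈ ℂ^N is nonzero with (λ² · diag(m) + λ · diag(γ) + L₀) v = 0, then either Re(λ) < 0, or λ = 0 and Bᵀ v = 0. (This establishes linear stability, transverse to the kernel of Bᵀ, of phase-locked states of the Kuramoto model with inertia m_n ẍ_n + γ_n ẋ_n = P_n − Σ_m a_{nm} K_{nm} sin(x_n − x_m) whenever m_n > 0, γ_n > 0, and K_{nm} cos(x_n° − x_m°) > 0 on every edge.) -/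
/-!
Pair the eigenvalue equation with `v̄`. Since `diag m`, `diag γ` and `B W Bᵀ` are Hermitian with
`v̄ᵀ (B W Bᵀ) v = ∑ₗ wₗ |(Bᵀ v)ₗ|²`, this yields the scalar equation `λ² a + λ b + c = 0` with
real `a, b > 0` and `c ≥ 0`. A non-real root of such a quadratic has real part `-b / 2a < 0`,
and a real root is negative unless it is `0`, in which case `c = 0`, i.e. `Bᵀ v = 0`.
-/

open Matrix

section WeightedNormSq

variable {ι : Type*} [Fintype ι]

def weightedNormSq (d : ι → ℝ) (v : ι → ℂ) : ℝ :=
  ∑ i, d i * Complex.normSq (v i)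

theorem weightedNormSq_nonneg {d : ι → ℝ} (hd : ∀ i, 0 ≤ d i) (v : ι → ℂ) :
    0 ≤ weightedNormSq d v :=
  Finset.sum_nonneg fun i _ => mul_nonneg (hd i) (Complex.normSq_nonneg _)

theorem weightedNormSq_eq_zero_iff {d : ι → ℝ} (hd : ∀ i, 0 < d i) {v : ι → ℂ} :
    weightedNormSq d v = 0 ↔ v = 0 := by
  rw [weightedNormSq, Finset.sum_eq_zero_iff_of_nonneg
    fun i _ => mul_nonneg (hd i).le (Complex.normSq_nonneg _), funext_iff]
  simp [(hd _).ne']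

theorem weightedNormSq_pos {d : ι → ℝ} (hd : ∀ i, 0 < d i) {v : ι → ℂ} (hv : v ≠ 0) :
    0 < weightedNormSq d v :=
  (weightedNormSq_nonneg (fun i => (hd i).le) v).lt_of_ne'
    ((weightedNormSq_eq_zero_iff hd).not.2 hv)

end WeightedNormSq

namespace Matrix

theorem map_ofReal_conjTranspose {ι κ : Type*} (B : Matrix ι κ ℝ) :
    (B.map fun x : ℝ => (x : ℂ))ᴴ = Bᵀ.map fun x : ℝ => (x : ℂ) := by
  ext i j
  simp [conjTranspose_apply]

theorem map_ofReal_mul_diagonal_mul_transpose {ι κ : Type*} [Fintype κ] [DecidableEq κ]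
    (B : Matrix ι κ ℝ) (w : κ → ℝ) :
    (B * diagonal w * Bᵀ).map (fun x : ℝ => (x : ℂ)) =
      B.map (fun x : ℝ => (x : ℂ)) * diagonal (fun l => (w l : ℂ)) *
        (B.map fun x : ℝ => (x : ℂ))ᴴ := by
  rw [map_ofReal_conjTranspose, show (fun x : ℝ => (x : ℂ)) = Complex.ofRealHom from rfl,
    Matrix.map_mul, Matrix.map_mul, diagonal_map (map_zero _)]
  rfl

variable {ι κ : Type*} [Fintype ι] [Fintype κ]

theorem star_dotProduct_diagonal_ofReal_mulVec [DecidableEq ι] (d : ι → ℝ) (v : ι → ℂ) :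
    star v ⬝ᵥ (diagonal (fun i => (d i : ℂ)) *ᵥ v) = weightedNormSq d v := by
  simp only [weightedNormSq, dotProduct, mulVec_diagonal, Complex.ofReal_sum,
    Complex.ofReal_mul, Complex.normSq_eq_conj_mul_self, Pi.star_apply, Complex.star_def]
  exact Finset.sum_congr rfl fun i _ => by ring

theorem star_dotProduct_mul_mul_conjTranspose_mulVec (A : Matrix ι κ ℂ) (D : Matrix κ κ ℂ)
    (v : ι → ℂ) :
    star v ⬝ᵥ ((A * D * Aᴴ) *ᵥ v) = star (Aᴴ *ᵥ v) ⬝ᵥ (D *ᵥ (Aᴴ *ᵥ v)) := by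
  rw [← mulVec_mulVec, ← mulVec_mulVec, dotProduct_mulVec, star_mulVec,
    conjTranspose_conjTranspose]

end Matrix

theorem Complex.re_neg_or_eq_zero_of_quadratic {a b c : ℝ} (ha : 0 < a) (hb : 0 < b)
    (hc : 0 ≤ c) {z : ℂ} (hz : z ^ 2 * a + z * b + c = 0) : z.re < 0 ∨ z = 0 := by
  have hre := congrArg Complex.re hz
  have him := congrArg Complex.im hz
  simp only [pow_two, Complex.add_re, Complex.add_im, Complex.mul_re, Complex.mul_im,
    Complex.ofReal_re, Complex.ofReal_im, Complex.zero_re, Complex.zero_im] at hre him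
  have hsplit : z.im * (2 * a * z.re + b) = 0 := by linarith
  rcases mul_eq_zero.1 hsplit with him0 | hvertex
  · rcases lt_trichotomy z.re 0 with hneg | hzero | hpos
    · exact Or.inl hneg
    · exact Or.inr (Complex.ext hzero him0)
    · rw [him0] at hre
      nlinarith [mul_pos ha (mul_pos hpos hpos)]
  · left
    nlinarith

/-- Quadratic eigenvalue problem for the Kuramoto model with
inertia.  With `m_n > 0`, `γ_n > 0`, and `L₀ = B W Bᵀ` for a positive diagonal
weight matrix `W`, every solution `(λ, v)`, `v ≠ 0`, of
`(λ² diag m + λ diag γ + L₀) v = 0` satisfies `Re λ < 0`, or `λ = 0` and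
`Bᵀ v = 0`. -/
theorem kuramoto_inertia_quadratic_stability {N L : ℕ}
    (m γ : Fin N → ℝ) (hm : ∀ n, 0 < m n) (hγ : ∀ n, 0 < γ n)
    (B : Matrix (Fin N) (Fin L) ℝ)
    (w : Fin L → ℝ) (hw : ∀ l, 0 < w l)
    (lam : ℂ) (v : Fin N → ℂ) (hv : v ≠ 0)
    (heig :
      (lam ^ 2 • Matrix.diagonal (fun n => (m n : ℂ)) +
       lam • Matrix.diagonal (fun n => (γ n : ℂ)) +
       (B * Matrix.diagonal w * Bᵀ).map (fun x : ℝ => (x : ℂ))) *ᵥ v = 0) :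
    lam.re < 0 ∨ (lam = 0 ∧ (Bᵀ.map fun x : ℝ => (x : ℂ)) *ᵥ v = 0) := by
  set u := (Bᵀ.map fun x : ℝ => (x : ℂ)) *ᵥ v
  have hquad :
      lam ^ 2 * weightedNormSq m v + lam * weightedNormSq γ v + weightedNormSq w u = 0 := by
    have := congrArg (star v ⬝ᵥ ·) heig
    rwa [add_mulVec, add_mulVec, smul_mulVec, smul_mulVec, dotProduct_add, dotProduct_add,
      dotProduct_smul, dotProduct_smul, map_ofReal_mul_diagonal_mul_transpose,
      star_dotProduct_mul_mul_conjTranspose_mulVec, map_ofReal_conjTranspose,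
      star_dotProduct_diagonal_ofReal_mulVec, star_dotProduct_diagonal_ofReal_mulVec,
      star_dotProduct_diagonal_ofReal_mulVec, dotProduct_zero, smul_eq_mul, smul_eq_mul] at this
  rcases Complex.re_neg_or_eq_zero_of_quadratic (weightedNormSq_pos hm hv)
      (weightedNormSq_pos hγ hv) (weightedNormSq_nonneg (fun l => (hw l).le) u) hquad with
    hre | rfl
  · exact Or.inl hre
  · refine Or.inr ⟨rfl, (weightedNormSq_eq_zero_iff hw).1 ?_⟩
    simpa using hquad
end

section
/- Let B be a real N×L matrix, let c : {1,…,L} → ℝ with c_l > 0 for all l, and let δ : {1,…,L} → ℝ satisfy cos(2 δ_l) > 0 for all l. Define the real (N+L)×(N+L) block matrix J with blocks J₁₁ = −B · diag(cos²(δ_l)/c_l) · Bᵀ, J₁₂ = −B · diag(sin δ_l), J₂₁ = −diag(sin δ_l) · Bᵀ, J₂₂ = −diag(c_l). Then J is symmetric and negative semidefinite: xᵀ J x ≤ 0 for all x ∈ ℝ^{N+L}. (J is the Jacobian of the adaptive Kuramoto model ẋ_n = ψ_n − Σ_m A_{nm} sin(x_n − x_m), Ȧ_{nm} = cos(x_n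 − x_m) − c_{nm} A_{nm} at a phase-locked state with steady phase differences δ_l across the edges; the condition cos(2δ_l) > 0 is equivalent to |δ_l| < π/4 modulo π.) -/
/-!
Negating the Jacobian gives the block matrix `[[B A Bᵀ, B S], [S Bᵀ, C]]` with `A = diag(cos² δ / c)`,
`S = diag(sin δ)` and `C = diag(c) > 0`. By the Schur complement criterion it is positive semidefinite
iff `B A Bᵀ - B S C⁻¹ S Bᵀ = B diag((cos² δ - sin² δ) / c) Bᵀ = B diag(cos 2δ / c) Bᵀ` is, and this
holds since `cos 2δ > 0`.
-/

open Matrix Real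

/-- The Jacobian of the adaptive Kuramoto model at a phase-locked state with
edge phase differences `δ` and adaptation rates `c`. -/
noncomputable def adaptiveKuramotoJacobian {N L : ℕ} (B : Matrix (Fin N) (Fin L) ℝ)
    (c δ : Fin L → ℝ) : Matrix (Fin N ⊕ Fin L) (Fin N ⊕ Fin L) ℝ :=
  Matrix.fromBlocks
    (-(B * Matrix.diagonal (fun l => Real.cos (δ l) ^ 2 / c l) * Bᵀ))
    (-(B * Matrix.diagonal (fun l => Real.sin (δ l))))
    (-(Matrix.diagonal (fun l => Real.sin (δ l)) * Bᵀ))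
    (-Matrix.diagonal c)

namespace Matrix

variable {m n K : Type*} [Fintype n] [DecidableEq n] [Field K]

lemma inv_diagonal_of_ne_zero {c : n → K} (hc : ∀ l, c l ≠ 0) :
    (diagonal c)⁻¹ = diagonal c⁻¹ := by
  refine inv_eq_left_inv ?_
  rw [diagonal_mul_diagonal, ← diagonal_one]
  exact congrArg diagonal (funext fun l => inv_mul_cancel₀ (hc l))

lemma mul_diagonal_mul_transpose_sub (B : Matrix m n K) (a s c : n → K) :
    B * diagonal a * Bᵀ - B * diagonal s * diagonal c⁻¹ * (diagonal s * Bᵀ) =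
      B * diagonal (fun l => a l - s l ^ 2 / c l) * Bᵀ := by
  rw [Matrix.mul_assoc B (diagonal s), diagonal_mul_diagonal', ← Matrix.mul_assoc _ (diagonal s),
    Matrix.mul_assoc B _ (diagonal s), diagonal_mul_diagonal', ← Matrix.sub_mul, ← Matrix.mul_sub,
    ← diagonal_sub]
  congr 4 with l
  rw [Pi.inv_apply]
  ring

theorem posSemidef_fromBlocks_mul_diagonal_mul_transpose [Fintype m] (B : Matrix m n ℝ)
    {a s c : n → ℝ} (hc : ∀ l, 0 < c l) (hsa : ∀ l, s l ^ 2 / c l ≤ a l) :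
    (fromBlocks (B * diagonal a * Bᵀ) (B * diagonal s) (diagonal s * Bᵀ)
      (diagonal c)).PosSemidef := by
  have hC : (diagonal c).PosDef := posDef_diagonal_iff.mpr hc
  have : Invertible (diagonal c) := invertibleOfIsUnitDet _ hC.det_pos.ne'.isUnit
  have hBS : (B * diagonal s)ᴴ = diagonal s * Bᵀ := by
    simp [conjTranspose_eq_transpose_of_trivial]
  rw [← hBS, PosDef.fromBlocks₂₂ _ _ hC, hBS, inv_diagonal_of_ne_zero fun l => (hc l).ne',
    mul_diagonal_mul_transpose_sub, ← conjTranspose_eq_transpose_of_trivial]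
  exact (posSemidef_diagonal_iff.mpr fun l => sub_nonneg.mpr (hsa l)).mul_mul_conjTranspose_same B

end Matrix

lemma neg_adaptiveKuramotoJacobian {N L : ℕ} (B : Matrix (Fin N) (Fin L) ℝ) (c δ : Fin L → ℝ) :
    -adaptiveKuramotoJacobian B c δ =
      fromBlocks (B * diagonal (fun l => cos (δ l) ^ 2 / c l) * Bᵀ)
        (B * diagonal (fun l => sin (δ l))) (diagonal (fun l => sin (δ l)) * Bᵀ) (diagonal c) := by
  simp only [adaptiveKuramotoJacobian, fromBlocks_neg, neg_neg]

lemma posSemidef_neg_adaptiveKuramotoJacobian {N L : ℕ} (B : Matrix (Fin N) (Fin L) ℝ)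
    {c δ : Fin L → ℝ} (hc : ∀ l, 0 < c l) (hδ : ∀ l, 0 < cos (2 * δ l)) :
    (-adaptiveKuramotoJacobian B c δ).PosSemidef := by
  rw [neg_adaptiveKuramotoJacobian]
  refine posSemidef_fromBlocks_mul_diagonal_mul_transpose B hc fun l => ?_
  have hcos := hδ l
  rw [cos_two_mul'] at hcos
  exact div_le_div_of_nonneg_right (by linarith) (hc l).le

/-- If `c_l > 0` and `cos (2 δ_l) > 0` for all edges, the Jacobian
of the adaptive Kuramoto model is symmetric and negative semidefinite. -/
theorem adaptiveKuramotoJacobian_negSemidef {N L : ℕ} (B : Matrix (Fin N) (Fin L) ℝ)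
    (c δ : Fin L → ℝ) (hc : ∀ l, 0 < c l) (hδ : ∀ l, 0 < Real.cos (2 * δ l)) :
    (adaptiveKuramotoJacobian B c δ).IsSymm ∧
    ∀ x : Fin N ⊕ Fin L → ℝ, x ⬝ᵥ ((adaptiveKuramotoJacobian B c δ) *ᵥ x) ≤ 0 := by
  have hP := posSemidef_neg_adaptiveKuramotoJacobian B hc hδ
  refine ⟨?_, fun x => ?_⟩
  · simpa using (isHermitian_iff_isSymm.mp hP.isHermitian).neg
  · simpa [neg_mulVec] using hP.dotProduct_mulVec_nonneg x
end

section
/- Let B be a real N×L matrix, let c : {1,…,L} → ℝ with c_l > 0 for all l, and let δ : {1,…,L} → ℝ satisfy cos(2 δ_l) > 0 for all l. Define the real (N+L)×(N+L) block matrix J with blocks J₁₁ = −B · diag(cos²(δ_l)/c_l) · Bᵀ, J₁₂ = −B · diag(sin δ_l), J₂₁ = −diag(sin δ_l) · Bᵀ, J₂₂ = −diag(c_l). Then the kernel of J is exactly { (x, a) ∈ ℝ^N × ℝ^L : Bᵀ x = 0 and a = 0 }. Combined with negative semidefiniteness of J, every nonzero eigenvalue of J is a strictly negative real number, so the phase-locked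 state is linearly stable transverse to the kernel of Bᵀ. -/
open Matrix Real

/-!
With `P = edgeMap B`, `P (x, a) = (Bᵀ x, a)`, the Jacobian factors as `J = -Pᵀ Q P`, where
`Q = edgeForm (cos² δ / c) (sin δ) c` couples the pair `(y_l, a_l)` of each edge through the 2×2
form `[[cos² δ_l / c_l, sin δ_l], [sin δ_l, c_l]]`, whose determinant is
`cos² δ_l - sin² δ_l = cos 2δ_l > 0`. Hence `Q` is positive definite, so `J z = 0` forces
`P z = 0`; and `-J` is positive semidefinite, so every eigenvalue of its complexification is a
nonnegative real number.
-/

open scoped ComplexOrder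

namespace Matrix

variable {n R : Type*} [Fintype n]

theorem mem_spectrum_of_mulVec_eq_smul [CommRing R] [DecidableEq n]
    {A : Matrix n n R} {μ : R} {v : n → R} (hv : v ≠ 0) (h : A *ᵥ v = μ • v) :
    μ ∈ spectrum R A := by
  rw [← spectrum_toLin']
  exact (Module.End.hasEigenvalue_of_hasEigenvector
    ⟨Module.End.mem_eigenspace_iff.mpr (by simpa using h), hv⟩).mem_spectrum

theorem PosSemidef.nonneg_of_mulVec_eq_smul {𝕜 : Type*} [RCLike 𝕜] {A : Matrix n n 𝕜}
    (hA : A.PosSemidef) {μ : 𝕜} {v : n → 𝕜} (hv : v ≠ 0) (h : A *ᵥ v = μ • v) : 0 ≤ μ := by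
  classical
  exact (posSemidef_iff_isHermitian_and_spectrum_nonneg.mp hA).2
    (mem_spectrum_of_mulVec_eq_smul hv h)

theorem PosSemidef.map_algebraMap {𝕜 : Type*} [RCLike 𝕜] {M : Matrix n n ℝ}
    (hM : M.PosSemidef) : (M.map (algebraMap ℝ 𝕜)).PosSemidef := by
  obtain ⟨m, v, rfl⟩ := posSemidef_iff_eq_sum_vecMulVec.mp hM
  refine posSemidef_iff_eq_sum_vecMulVec.mpr ⟨m, fun i => algebraMap ℝ 𝕜 ∘ v i, ?_⟩
  ext j k
  simp [sum_apply, vecMulVec_apply]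

theorem PosDef.conjTranspose_mul_mul_mulVec_eq_zero_iff {m : Type*} [Fintype m] [Ring R]
    [PartialOrder R] [StarRing R] {Q : Matrix m m R} (hQ : Q.PosDef) (P : Matrix m n R)
    (z : n → R) : (Pᴴ * Q * P) *ᵥ z = 0 ↔ P *ᵥ z = 0 := by
  refine ⟨fun h => ?_, fun h => by rw [← mulVec_mulVec, h, mulVec_zero]⟩
  by_contra hPz
  have := hQ.dotProduct_mulVec_pos hPz
  rw [star_mulVec, ← dotProduct_mulVec, mulVec_mulVec, mulVec_mulVec, h,
    dotProduct_zero] at this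
  exact this.false

end Matrix

theorem binaryQuadraticForm_pos {d s e y a : ℝ} (he : 0 < e) (hs : s ^ 2 < d * e)
    (hya : y ≠ 0 ∨ a ≠ 0) : 0 < d * y ^ 2 + 2 * s * y * a + e * a ^ 2 := by
  have key : e * (d * y ^ 2 + 2 * s * y * a + e * a ^ 2) =
      (e * a + s * y) ^ 2 + (d * e - s ^ 2) * y ^ 2 := by ring
  rcases eq_or_ne y 0 with rfl | hy
  · have ha : a ≠ 0 := hya.resolve_left (not_not.mpr rfl)
    simpa using mul_pos he (pow_two_pos_of_ne_zero ha)
  · refine pos_of_mul_pos_right (key ▸ ?_) he.le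
    nlinarith [sq_nonneg (e * a + s * y), mul_pos (sub_pos.mpr hs) (pow_two_pos_of_ne_zero hy)]

section EdgeForm

variable {n l R : Type*} [Fintype l] [DecidableEq l]

def edgeMap [Zero R] [One R] (B : Matrix n l R) : Matrix (l ⊕ l) (n ⊕ l) R :=
  fromBlocks Bᵀ 0 0 1

def edgeForm [Zero R] (d s e : l → R) : Matrix (l ⊕ l) (l ⊕ l) R :=
  fromBlocks (diagonal d) (diagonal s) (diagonal s) (diagonal e)

theorem edgeMap_mulVec_eq_zero_iff [Fintype n] [Semiring R] (B : Matrix n l R)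
    (z : n ⊕ l → R) : edgeMap B *ᵥ z = 0 ↔ Bᵀ *ᵥ (z ∘ Sum.inl) = 0 ∧ z ∘ Sum.inr = 0 := by
  rw [← Sum.elim_comp_inl_inr z, edgeMap, fromBlocks_mulVec]
  simp [funext_iff, Sum.forall]

theorem edgeMap_transpose_mul_edgeForm_mul_edgeMap [CommRing R]
    (B : Matrix n l R) (d s e : l → R) :
    (edgeMap B)ᵀ * edgeForm d s e * edgeMap B =
      fromBlocks (B * diagonal d * Bᵀ) (B * diagonal s) (diagonal s * Bᵀ) (diagonal e) := by
  simp [edgeMap, edgeForm, fromBlocks_transpose, fromBlocks_multiply]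

theorem dotProduct_edgeForm_mulVec [CommRing R] (d s e y a : l → R) :
    Sum.elim y a ⬝ᵥ (edgeForm d s e *ᵥ Sum.elim y a) =
      ∑ i, (d i * y i ^ 2 + 2 * s i * y i * a i + e i * a i ^ 2) := by
  rw [edgeForm, fromBlocks_mulVec, sumElim_dotProduct_sumElim]
  simp only [Sum.elim_comp_inl, Sum.elim_comp_inr, mulVec_diagonal, dotProduct, Pi.add_apply,
    ← Finset.sum_add_distrib]
  exact Finset.sum_congr rfl fun i _ => by ring

theorem edgeForm_posDef {d s e : l → ℝ} (he : ∀ i, 0 < e i) (hs : ∀ i, s i ^ 2 < d i * e i) :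
    (edgeForm d s e).PosDef := by
  refine .of_dotProduct_mulVec_pos ?_ fun z hz => ?_
  · simp [edgeForm, IsHermitian, fromBlocks_transpose]
  obtain ⟨y, a, rfl⟩ : ∃ y a, z = Sum.elim y a := ⟨_, _, (Sum.elim_comp_inl_inr z).symm⟩
  have hterm (i : l) (hi : y i ≠ 0 ∨ a i ≠ 0) := binaryQuadraticForm_pos (he i) (hs i) hi
  rw [star_trivial, dotProduct_edgeForm_mulVec]
  obtain ⟨j, hj⟩ := Function.ne_iff.mp hz
  refine Finset.sum_pos' (fun i _ => ?_) ⟨j.elim id id, Finset.mem_univ _, hterm _ ?_⟩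
  · by_cases hi : y i ≠ 0 ∨ a i ≠ 0
    · exact (hterm i hi).le
    · simp only [not_or, not_not] at hi
      simp [hi.1, hi.2]
  · rcases j with i | i
    exacts [.inl hj, .inr hj]

end EdgeForm

theorem adaptiveKuramotoJacobian_eq {N L : ℕ} (B : Matrix (Fin N) (Fin L) ℝ) (c δ : Fin L → ℝ) :
    adaptiveKuramotoJacobian B c δ =
      -((edgeMap B)ᴴ * edgeForm (fun l => cos (δ l) ^ 2 / c l) (fun l => sin (δ l)) c *
        edgeMap B) := by
  rw [conjTranspose_eq_transpose_of_trivial, edgeMap_transpose_mul_edgeForm_mul_edgeMap,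
    adaptiveKuramotoJacobian, fromBlocks_neg]

/-- If `c_l > 0` and `cos (2 δ_l) > 0` for all edges, the kernel
of the adaptive Kuramoto Jacobian `J` is exactly
`{(x, a) : Bᵀ x = 0 ∧ a = 0}`, and every nonzero (complex) eigenvalue of `J` is
a strictly negative real number. -/
theorem adaptiveKuramotoJacobian_kernel {N L : ℕ} (B : Matrix (Fin N) (Fin L) ℝ)
    (c δ : Fin L → ℝ) (hc : ∀ l, 0 < c l) (hδ : ∀ l, 0 < Real.cos (2 * δ l)) :
    (∀ z : Fin N ⊕ Fin L → ℝ,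
      (adaptiveKuramotoJacobian B c δ) *ᵥ z = 0 ↔
        (Bᵀ *ᵥ (z ∘ Sum.inl) = 0 ∧ z ∘ Sum.inr = 0)) ∧
    (∀ (μ : ℂ) (v : Fin N ⊕ Fin L → ℂ), v ≠ 0 →
      ((adaptiveKuramotoJacobian B c δ).map (fun x : ℝ => (x : ℂ))) *ᵥ v = μ • v →
      μ ≠ 0 → ∃ r : ℝ, r < 0 ∧ μ = (r : ℂ)) := by
  have hQ : (edgeForm (fun l => cos (δ l) ^ 2 / c l) (fun l => sin (δ l)) c).PosDef := by
    refine edgeForm_posDef hc fun l => ?_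
    rw [div_mul_cancel₀ _ (hc l).ne']
    linarith [hδ l, cos_two_mul' (δ l)]
  rw [adaptiveKuramotoJacobian_eq]
  refine ⟨fun z => ?_, fun μ v hv hJv hμ => ?_⟩
  · rw [neg_mulVec, neg_eq_zero, hQ.conjTranspose_mul_mul_mulVec_eq_zero_iff,
      edgeMap_mulVec_eq_zero_iff]
  · rw [Matrix.map_neg _ Complex.ofReal_neg, neg_mulVec, neg_eq_iff_eq_neg, ← neg_smul] at hJv
    have hM := (hQ.posSemidef.conjTranspose_mul_mul_same (edgeMap B)).map_algebraMap (𝕜 := ℂ)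
    obtain ⟨hre, him⟩ := Complex.nonneg_iff.mp (hM.nonneg_of_mulVec_eq_smul hv hJv)
    have hμ_real : μ = μ.re := Complex.ext rfl (by simpa using him.symm)
    refine ⟨μ.re, lt_of_le_of_ne (by simpa using hre) fun h0 => hμ ?_, hμ_real⟩
    rw [hμ_real, h0, Complex.ofReal_zero]
end

section
/- Scalar Nyquist-type stability condition: let p be a rational function with complex coefficients that is proper (the degree of its numerator is at most the degree of its denominator) and has no poles in the closed right half-plane { s ∈ ℂ : Re(s) ≥ 0 }. Suppose that for every ω ∈ ℝ the value p(iω) is not a real number ≤ −1, and that the limit of p(s) as |s| → ∞ is also not a real number ≤ −1. Then 1 + p(s) ≠ 0 for every s ∈ ℂ with Re(s) ≥ 0. -/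
open Polynomial Filter Bornology Topology Set Complex

/-!
Put `g = 1 + p`; we show that `g` maps the closed right half-plane `S` into the slit plane
`ℂ ∖ (-∞, 0]`. Since `g` tends to a point of the slit plane at infinity, the points of `S` that
`g` sends onto the slit form a compact set. If it were nonempty, pick a point `s` of it at which
`Re g` is minimal. The frequency condition keeps `s` off the imaginary axis, so `s` is interior,
and `g` is not constant (its limit at infinity is off the slit); by the open mapping theorem `g`
then also takes values on the slit slightly to the left of `g s`, contradicting minimality.
-/

theorem Polynomial.tendsto_eval_div_pow_cobounded {𝕜 : Type*} [NontriviallyNormedField 𝕜]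
    (P : 𝕜[X]) {n : ℕ} (hn : P.natDegree ≤ n) :
    Tendsto (fun x => P.eval x / x ^ n) (cobounded 𝕜) (𝓝 (P.coeff n)) := by
  have hreflect :
      (fun x => (reflect n P).eval x⁻¹) =ᶠ[cobounded 𝕜] fun x => P.eval x / x ^ n := by
    filter_upwards [eventually_ne_cobounded 0] with x hx
    let _ := invertibleOfNonzero hx
    rw [eq_div_iff (pow_ne_zero n hx), ← invOf_eq_inv]
    exact eval₂_reflect_mul_pow (RingHom.id 𝕜) x n P hn
  have h0 : (reflect n P).eval 0 = P.coeff n := by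
    rw [← coeff_zero_eq_eval_zero, coeff_reflect, revAt_zero]
  rw [← h0]
  exact ((reflect n P).continuous.tendsto 0).comp tendsto_inv₀_cobounded |>.congr' hreflect

theorem Polynomial.tendsto_eval_div_eval_cobounded {𝕜 : Type*} [NontriviallyNormedField 𝕜]
    {P Q : 𝕜[X]} (hQ : Q ≠ 0) (h : P.degree ≤ Q.degree) :
    Tendsto (fun x => P.eval x / Q.eval x) (cobounded 𝕜)
      (𝓝 (P.coeff Q.natDegree / Q.leadingCoeff)) := by
  refine ((P.tendsto_eval_div_pow_cobounded (natDegree_le_natDegree h)).div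
    (Q.tendsto_eval_div_pow_cobounded le_rfl) (leadingCoeff_ne_zero.2 hQ)).congr' ?_
  filter_upwards [eventually_ne_cobounded 0] with x hx
  exact div_div_div_cancel_right₀ (pow_ne_zero _ hx) _ _

theorem RatFunc.differentiableAt_eval {𝕜 : Type*} [NontriviallyNormedField 𝕜] {p : RatFunc 𝕜}
    {x : 𝕜} (hx : p.denom.eval x ≠ 0) :
    DifferentiableAt 𝕜 (fun z => p.eval (RingHom.id 𝕜) z) x :=
  p.num.differentiableAt.div p.denom.differentiableAt hx

theorem isCompact_inter_preimage_compl_of_tendsto_cobounded {X Y : Type*} [PseudoMetricSpace X]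
    [ProperSpace X] [TopologicalSpace Y] {S : Set X} {U : Set Y} {f : X → Y} {l : Y}
    (hS : IsClosed S) (hU : IsOpen U) (hf : ContinuousOn f S)
    (hfl : Tendsto f (cobounded X ⊓ 𝓟 S) (𝓝 l)) (hl : l ∈ U) :
    IsCompact (S ∩ f ⁻¹' Uᶜ) := by
  refine Metric.isCompact_of_isClosed_isBounded
    (hf.preimage_isClosed_of_isClosed hS hU.isClosed_compl) (isBounded_def.2 ?_)
  have := mem_inf_principal.1 (hfl (hU.mem_nhds hl))
  filter_upwards [this] with x hx ⟨hxS, hxU⟩ using hxU (hx hxS)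

theorem Bornology.inf_principal_neBot_of_not_isBounded {α : Type*} [Bornology α] {s : Set α}
    (hs : ¬IsBounded s) : (cobounded α ⊓ 𝓟 s).NeBot := by
  refine inf_principal_neBot_iff.2 fun V hV => not_not.1 fun hempty => hs ?_
  exact (isBounded_compl_iff.2 hV).subset fun x hx hxV => hempty ⟨x, hxV, hx⟩

theorem Complex.not_isBounded_setOf_lt_re (a : ℝ) : ¬IsBounded {z : ℂ | a < z.re} := by
  intro hb
  obtain ⟨R, hR⟩ := hb.subset_closedBall 0
  have hmem : ((max a R + 1 : ℝ) : ℂ) ∈ {z : ℂ | a < z.re} := by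
    simp only [mem_ofPred_eq, ofReal_re]
    linarith [le_max_left a R]
  have hle := mem_closedBall_zero_iff.1 (hR hmem)
  rw [norm_real, Real.norm_eq_abs] at hle
  linarith [le_abs_self (max a R + 1), le_max_right a R]

theorem Complex.one_add_mem_slitPlane_iff {z : ℂ} :
    1 + z ∈ slitPlane ↔ ¬∃ x : ℝ, x ≤ -1 ∧ z = x := by
  rw [← not_iff_not, not_not, mem_slitPlane_iff, not_or, not_lt, not_not, add_re, one_re,
    add_im, one_im, zero_add]
  constructor
  · exact fun ⟨hre, him⟩ => ⟨z.re, by linarith, ext rfl (by simpa using him)⟩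
  · rintro ⟨x, hx, rfl⟩
    exact ⟨by simp only [ofReal_re]; linarith, ofReal_im x⟩

theorem Complex.exists_notMem_slitPlane_re_lt_of_mem_nhds {w : ℂ} {W : Set ℂ}
    (hw : w ∉ slitPlane) (hW : W ∈ 𝓝 w) : ∃ z ∈ W, z ∉ slitPlane ∧ z.re < w.re := by
  have hshift : Tendsto (fun t : ℝ => w - t) (𝓝[>] 0) (𝓝 w) := by
    have : Tendsto (fun t : ℝ => w - t) (𝓝 0) (𝓝 (w - (0 : ℝ))) :=
      (continuous_const.sub continuous_ofReal).tendsto 0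
    simpa using this.mono_left nhdsWithin_le_nhds
  obtain ⟨t, htW, ht⟩ := ((hshift.eventually hW).and self_mem_nhdsWithin).exists
  simp only [mem_slitPlane_iff, not_or, not_lt, not_not] at hw ⊢
  exact ⟨w - t, htW, ⟨by simp only [sub_re, ofReal_re]; linarith [hw.1], by simp [hw.2]⟩,
    by simpa using ht⟩

theorem Complex.mapsTo_slitPlane_of_mapsTo_frontier {S : Set ℂ} {g : ℂ → ℂ} {l : ℂ}
    (hS : IsClosed S) (hSc : IsPreconnected (interior S)) (hSb : ¬IsBounded (interior S))
    (hc : ContinuousOn g S) (hd : DifferentiableOn ℂ g (interior S))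
    (hgl : Tendsto g (cobounded ℂ ⊓ 𝓟 S) (𝓝 l)) (hl : l ∈ slitPlane)
    (hfr : MapsTo g (frontier S) slitPlane) :
    MapsTo g S slitPlane := by
  by_contra hmaps
  have hD : (S ∩ g ⁻¹' slitPlaneᶜ).Nonempty := by
    simpa [MapsTo, Set.Nonempty] using hmaps
  have hDc := isCompact_inter_preimage_compl_of_tendsto_cobounded hS isOpen_slitPlane hc hgl hl
  obtain ⟨s, ⟨hsS, hs⟩, hmin⟩ :=
    hDc.exists_isMinOn hD (continuous_re.comp_continuousOn (hc.mono inter_subset_left))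
  have hsi : s ∈ interior S := self_sdiff_frontier S ▸ ⟨hsS, fun h => hs (hfr h)⟩
  rcases (hd.analyticOnNhd isOpen_interior).is_constant_or_isOpen hSc with ⟨w, hw⟩ | hopen
  · have := inf_principal_neBot_of_not_isBounded hSb
    have hlw : l = w := tendsto_nhds_unique
      (hgl.mono_left (inf_le_inf_left _ (principal_mono.2 interior_subset)))
      (tendsto_const_nhds.congr' (eventuallyEq_of_mem (mem_inf_of_right (mem_principal_self _))
        fun z hz => (hw z hz).symm))
    exact hs (hw s hsi ▸ hlw ▸ hl)
  · obtain ⟨_, ⟨z, hzi, rfl⟩, hz, hlt⟩ := exists_notMem_slitPlane_re_lt_of_mem_nhds hs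
      ((hopen _ subset_rfl isOpen_interior).mem_nhds (mem_image_of_mem g hsi))
    exact (hmin ⟨interior_subset hzi, hz⟩).not_gt hlt

/-- Scalar Nyquist-type stability condition.  If `p` is a proper
complex rational function with no poles in the closed right half-plane, whose
values on the imaginary axis are never real numbers `≤ -1`, and whose limit as
`|s| → ∞` is not a real number `≤ -1`, then `1 + p(s) ≠ 0` on the closed right
half-plane. -/
theorem scalar_nyquist_stability (p : RatFunc ℂ)
    (hproper : p.num.degree ≤ p.denom.degree)
    (hpoles : ∀ s : ℂ, 0 ≤ s.re → p.denom.eval s ≠ 0)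
    (hfreq : ∀ ω : ℝ, ¬∃ x : ℝ, x ≤ -1 ∧
      p.eval (RingHom.id ℂ) ((ω : ℂ) * Complex.I) = (x : ℂ))
    (hlim : ∀ l : ℂ,
      Tendsto (fun s : ℂ => p.eval (RingHom.id ℂ) s)
        (Filter.comap (fun s : ℂ => ‖s‖) Filter.atTop) (nhds l) →
      ¬∃ x : ℝ, x ≤ -1 ∧ l = (x : ℂ)) :
    ∀ s : ℂ, 0 ≤ s.re → 1 + p.eval (RingHom.id ℂ) s ≠ 0 := by
  have hp : Tendsto (fun s : ℂ => p.eval (RingHom.id ℂ) s) (cobounded ℂ)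
      (𝓝 (p.num.coeff p.denom.natDegree / p.denom.leadingCoeff)) :=
    tendsto_eval_div_eval_cobounded p.denom_ne_zero hproper
  have hd : DifferentiableOn ℂ (fun s => 1 + p.eval (RingHom.id ℂ) s) {s | 0 ≤ s.re} :=
    fun s hs => ((RatFunc.differentiableAt_eval (hpoles s hs)).const_add 1).differentiableWithinAt
  have hmaps : MapsTo (fun s => 1 + p.eval (RingHom.id ℂ) s) {s | 0 ≤ s.re} slitPlane := by
    refine mapsTo_slitPlane_of_mapsTo_frontier (isClosed_le continuous_const continuous_re)
      ?_ ?_ hd.continuousOn (hd.mono interior_subset) ((hp.const_add 1).mono_left inf_le_left)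
      (one_add_mem_slitPlane_iff.2 (hlim _ ((comap_norm_atTop (E := ℂ)).symm ▸ hp))) ?_
    · rw [interior_setOfPred_le_re]
      exact (convex_halfSpace_re_gt 0).isPreconnected
    · rw [interior_setOfPred_le_re]
      exact not_isBounded_setOf_lt_re 0
    · rw [frontier_setOfPred_le_re]
      intro s (hs : s.re = 0)
      have hsI : (s.im : ℂ) * I = s := by simpa [hs] using re_add_im s
      exact one_add_mem_slitPlane_iff.2 (hsI ▸ hfreq s.im)
  exact fun s hs => slitPlane_ne_zero (hmaps hs)
end

section
/- Small gain theorem, determinant form: let G and H be N×N matrices whose entries are rational functions with complex coefficients, each entry proper (numerator degree at most denominator degree) and with no poles in the closed right half-plane { s ∈ ℂ : Re(s) ≥ 0 }. Suppose that for every ω ∈ ℝ the spectral norms satisfy σ̄(G(iω)) · σ̄(H(iω)) < 1, and that the same strict inequality holds for the entrywise limit matrices G(∞), H(∞) as |s| → ∞. Then det(I + H(s) G(s)) ≠ 0 for every s ∈ ℂ with Re(s) ≥ 0. -/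
/-!
Suppose `det (1 + H(s₀) G(s₀)) = 0` with `Re s₀ ≥ 0`. Then the loop operator `T(s) = H(s) G(s)`,
acting on `ℓ²`, has norm at least `1` at `s₀`, since `1 + T(s₀)` is not invertible (Neumann series).
On the other hand, because its entries are proper and pole-free, `T` is holomorphic and bounded on
the closed right half-plane. On the imaginary axis `‖T(iω)‖ ≤ σ̄(H(iω)) σ̄(G(iω))`, and this
continuous gain is bounded by some `c < 1`: away from a compact set it is close to the gain at `∞`.
By Phragmén–Lindelöf, `‖T(s₀)‖ ≤ c < 1`, which is a contradiction.
-/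

open Matrix Polynomial Filter

/-- The spectral norm (largest singular value) of a complex matrix, i.e. its
operator norm as a linear map between the corresponding finite-dimensional
ℓ² spaces. -/
noncomputable def specNorm {m n : Type*} [Fintype m] [Fintype n] [DecidableEq n]
    (A : Matrix m n ℂ) : ℝ :=
  ‖LinearMap.toContinuousLinearMap (Matrix.toEuclideanLin A)‖

/-- Entrywise evaluation of a matrix of rational functions at a point. -/
noncomputable def evalMatrix {N : ℕ} (G : Matrix (Fin N) (Fin N) (RatFunc ℂ)) (s : ℂ) :
    Matrix (Fin N) (Fin N) ℂ :=
  G.map (fun g => g.eval (RingHom.id ℂ) s)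

open Bornology Topology

namespace Polynomial

variable {𝕜 : Type*} [NormedField 𝕜]

theorem eval_div_pow_eq_eval_reflect_inv {p : 𝕜[X]} {d : ℕ} (hp : p.natDegree ≤ d) {s : 𝕜}
    (hs : s ≠ 0) : p.eval s / s ^ d = (p.reflect d).eval s⁻¹ := by
  let := invertibleOfNonzero hs
  rw [div_eq_iff (pow_ne_zero d hs), ← invOf_eq_inv]
  exact (eval₂_reflect_mul_pow (RingHom.id 𝕜) s d p hp).symm

theorem tendsto_eval_div_pow_cobounded_s12 {p : 𝕜[X]} {d : ℕ} (hp : p.natDegree ≤ d) :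
    Tendsto (fun s => p.eval s / s ^ d) (cobounded 𝕜) (𝓝 (p.coeff d)) := by
  have hlim : Tendsto (fun s : 𝕜 => (p.reflect d).eval s⁻¹) (cobounded 𝕜) (𝓝 (p.coeff d)) := by
    rw [← revAt_zero d, ← coeff_reflect, coeff_zero_eq_eval_zero]
    exact ((p.reflect d).continuous.tendsto 0).comp tendsto_inv₀_cobounded
  refine hlim.congr' ?_
  filter_upwards [eventually_ne_cobounded 0] with s hs
  exact (eval_div_pow_eq_eval_reflect_inv hp hs).symm

end Polynomial

namespace RatFunc

theorem tendsto_eval_cobounded {𝕜 : Type*} [NormedField 𝕜] {g : RatFunc 𝕜}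
    (hg : g.num.degree ≤ g.denom.degree) :
    Tendsto (fun s => g.eval (RingHom.id 𝕜) s) (cobounded 𝕜)
      (𝓝 (g.num.coeff g.denom.natDegree / g.denom.leadingCoeff)) := by
  have hden := tendsto_eval_div_pow_cobounded_s12 (p := g.denom) le_rfl
  have hnum := tendsto_eval_div_pow_cobounded_s12 (natDegree_le_natDegree hg)
  have hlc : g.denom.leadingCoeff ≠ 0 := leadingCoeff_ne_zero.mpr g.denom_ne_zero
  refine (hnum.div hden hlc).congr' ?_
  filter_upwards [eventually_ne_cobounded 0] with s hs
  exact div_div_div_cancel_right₀ (pow_ne_zero _ hs) _ _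

theorem differentiableAt_eval_s12 {𝕜 : Type*} [NontriviallyNormedField 𝕜] (g : RatFunc 𝕜) {s : 𝕜}
    (hs : g.denom.eval s ≠ 0) : DifferentiableAt 𝕜 (fun z => g.eval (RingHom.id 𝕜) z) s :=
  g.num.differentiableAt.div g.denom.differentiableAt hs

end RatFunc

theorem exists_lt_forall_le_of_tendsto_cocompact {X α : Type*} [TopologicalSpace X]
    [LinearOrder α] [TopologicalSpace α] [OrderTopology α] [DenselyOrdered α] {f : X → α}
    {a L : α} (hf : Continuous f) (hlt : ∀ x, f x < a) (hL : L < a)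
    (hlim : Tendsto f (cocompact X) (𝓝 L)) : ∃ c < a, ∀ x, f x ≤ c := by
  obtain ⟨b, hLb, hba⟩ := exists_between hL
  cases isEmpty_or_nonempty X with
  | inl => exact ⟨b, hba, isEmptyElim⟩
  | inr hX =>
    obtain ⟨x₀⟩ := hX
    have hcap : ∀ᶠ x in cocompact X, max (f x) b ≤ max (f x₀) b := by
      filter_upwards [hlim.eventually (ge_mem_nhds hLb)] with x hx
      exact (max_eq_right hx).trans_le (le_max_right _ _)
    obtain ⟨x₁, hx₁⟩ := (hf.max continuous_const).exists_forall_ge' x₀ hcap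
    exact ⟨max (f x₁) b, max_lt (hlt x₁) hba, fun x => (le_max_left _ _).trans (hx₁ x)⟩

theorem tendsto_ofReal_mul_I_cocompact :
    Tendsto (fun ω : ℝ => (ω : ℂ) * Complex.I) (cocompact ℝ) (cobounded ℂ) := by
  rw [← Metric.cobounded_eq_cocompact, ← comap_norm_atTop (E := ℂ), tendsto_comap_iff]
  simpa only [Function.comp_def, norm_mul, Complex.norm_I, mul_one, Complex.norm_real] using
    tendsto_norm_cobounded_atTop

namespace PhragmenLindelof

theorem right_half_plane_of_isBoundedUnder_cobounded {E : Type*} [NormedAddCommGroup E]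
    [NormedSpace ℂ E] {f : ℂ → E} {C : ℝ} (hd : ∀ z : ℂ, 0 ≤ z.re → DifferentiableAt ℂ f z)
    (hbdd : IsBoundedUnder (· ≤ ·) (cobounded ℂ) fun z => ‖f z‖)
    (him : ∀ ω : ℝ, ‖f (ω * Complex.I)‖ ≤ C) {z : ℂ} (hz : 0 ≤ z.re) : ‖f z‖ ≤ C := by
  have hO : f =O[cobounded ℂ] fun _ => (1 : ℝ) := hbdd.isBigO_one ℝ
  refine right_half_plane_of_bounded_on_real ?_ ⟨1, one_lt_two, 0, ?_⟩ ?_ him hz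
  · refine DifferentiableOn.diffContOnCl fun w hw => (hd w ?_).differentiableWithinAt
    rwa [Complex.closure_setOfPred_lt_re] at hw
  · simpa using hO.mono inf_le_left
  · exact (Asymptotics.isBigO_one_iff ℝ).mp
      (hO.comp_tendsto (RCLike.tendsto_ofReal_atTop_cobounded ℂ))

end PhragmenLindelof

namespace Matrix

variable {n 𝕜 : Type*} [RCLike 𝕜] [Fintype n] [DecidableEq n]

theorem continuous_toEuclideanCLM : Continuous (toEuclideanCLM (n := n) (𝕜 := 𝕜)) :=
  (toEuclideanCLM (n := n) (𝕜 := 𝕜)).toAlgEquiv.toLinearMap.continuous_of_finiteDimensional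

section

attribute [local instance] Matrix.normedAddCommGroup Matrix.normedSpace

theorem differentiableAt_toEuclideanCLM_comp {f : 𝕜 → Matrix n n 𝕜} {s : 𝕜}
    (hf : ∀ i j, DifferentiableAt 𝕜 (fun z => f z i j) s) :
    DifferentiableAt 𝕜 (fun z => toEuclideanCLM (n := n) (𝕜 := 𝕜) (f z)) s :=
  (LinearMap.toContinuousLinearMap (toEuclideanCLM (n := n) (𝕜 := 𝕜)).toAlgEquiv.toLinearMap
    ).differentiableAt.comp s (differentiableAt_pi.2 fun i => differentiableAt_pi.2 (hf i))

end

theorem det_one_add_ne_zero_of_norm_toEuclideanCLM_lt_one {A : Matrix n n 𝕜}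
    (h : ‖toEuclideanCLM (n := n) (𝕜 := 𝕜) A‖ < 1) : (1 + A).det ≠ 0 := by
  have hunit : IsUnit (toEuclideanCLM (n := n) (𝕜 := 𝕜) (1 + A)) := by
    simpa [sub_neg_eq_add] using
      isUnit_one_sub_of_norm_lt_one (x := -toEuclideanCLM (n := n) (𝕜 := 𝕜) A) (by simpa)
  exact ((isUnit_iff_isUnit_det _).mp ((isUnit_map_iff toEuclideanCLM _).mp hunit)).ne_zero

end Matrix

theorem specNorm_eq_norm_toEuclideanCLM {n : Type*} [Fintype n] [DecidableEq n]
    (A : Matrix n n ℂ) : specNorm A = ‖toEuclideanCLM (n := n) (𝕜 := ℂ) A‖ :=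
  rfl

section TransferMatrix

variable {N : ℕ} {G : Matrix (Fin N) (Fin N) (RatFunc ℂ)}

theorem exists_tendsto_evalMatrix_cobounded
    (hG : ∀ i j, (G i j).num.degree ≤ (G i j).denom.degree) :
    ∃ Ginf : Matrix (Fin N) (Fin N) ℂ, Tendsto (evalMatrix G) (cobounded ℂ) (𝓝 Ginf) :=
  ⟨_, tendsto_pi_nhds.2 fun i => tendsto_pi_nhds.2 fun j =>
    RatFunc.tendsto_eval_cobounded (hG i j)⟩

theorem differentiableAt_toEuclideanCLM_evalMatrix {s : ℂ}
    (hs : ∀ i j, (G i j).denom.eval s ≠ 0) :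
    DifferentiableAt ℂ (fun z => toEuclideanCLM (n := Fin N) (𝕜 := ℂ) (evalMatrix G z)) s :=
  differentiableAt_toEuclideanCLM_comp fun i j => (G i j).differentiableAt_eval_s12 (hs i j)

theorem continuous_specNorm_evalMatrix_ofReal_mul_I
    (hG : ∀ i j (ω : ℝ), (G i j).denom.eval (ω * Complex.I) ≠ 0) :
    Continuous fun ω : ℝ => specNorm (evalMatrix G (ω * Complex.I)) := by
  simp only [specNorm_eq_norm_toEuclideanCLM]
  refine continuous_iff_continuousAt.2 fun ω => ContinuousAt.norm ?_
  exact (differentiableAt_toEuclideanCLM_evalMatrix (hG · · ω)).continuousAt.comp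
    (f := fun ω : ℝ => (ω : ℂ) * Complex.I) (by fun_prop)

theorem tendsto_specNorm_evalMatrix_ofReal_mul_I {Ginf : Matrix (Fin N) (Fin N) ℂ}
    (hG : Tendsto (evalMatrix G) (cobounded ℂ) (𝓝 Ginf)) :
    Tendsto (fun ω : ℝ => specNorm (evalMatrix G (ω * Complex.I))) (cocompact ℝ)
      (𝓝 (specNorm Ginf)) :=
  ((continuous_toEuclideanCLM (n := Fin N) (𝕜 := ℂ)).norm.tendsto Ginf).comp (hG.comp tendsto_ofReal_mul_I_cocompact)

end TransferMatrix

/-- Small gain theorem, determinant form.  If `G` and `H` are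
square matrices of proper rational functions without poles in the closed right
half-plane, the product of spectral norms `σ̄(G(iω)) σ̄(H(iω))` is `< 1` for all
real `ω`, and the same holds for the entrywise limits at `∞`, then
`det (I + H(s) G(s)) ≠ 0` on the closed right half-plane. -/
theorem small_gain_theorem_det {N : ℕ} (G H : Matrix (Fin N) (Fin N) (RatFunc ℂ))
    (hGproper : ∀ i j, (G i j).num.degree ≤ (G i j).denom.degree)
    (hHproper : ∀ i j, (H i j).num.degree ≤ (H i j).denom.degree)
    (hGpoles : ∀ i j, ∀ s : ℂ, 0 ≤ s.re → (G i j).denom.eval s ≠ 0)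
    (hHpoles : ∀ i j, ∀ s : ℂ, 0 ≤ s.re → (H i j).denom.eval s ≠ 0)
    (hgain : ∀ ω : ℝ,
      specNorm (evalMatrix G ((ω : ℂ) * Complex.I)) *
        specNorm (evalMatrix H ((ω : ℂ) * Complex.I)) < 1)
    (hgain_inf : ∀ Ginf Hinf : Matrix (Fin N) (Fin N) ℂ,
      (∀ i j, Tendsto (fun s : ℂ => (G i j).eval (RingHom.id ℂ) s)
        (Filter.comap (fun s : ℂ => ‖s‖) Filter.atTop) (nhds (Ginf i j))) →
      (∀ i j, Tendsto (fun s : ℂ => (H i j).eval (RingHom.id ℂ) s)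
        (Filter.comap (fun s : ℂ => ‖s‖) Filter.atTop) (nhds (Hinf i j))) →
      specNorm Ginf * specNorm Hinf < 1) :
    ∀ s : ℂ, 0 ≤ s.re → (1 + evalMatrix H s * evalMatrix G s).det ≠ 0 := by
  rw [comap_norm_atTop] at hgain_inf
  obtain ⟨Ginf, hGinf⟩ := exists_tendsto_evalMatrix_cobounded hGproper
  obtain ⟨Hinf, hHinf⟩ := exists_tendsto_evalMatrix_cobounded hHproper
  have hgain_lim := hgain_inf Ginf Hinf
    (fun i j => tendsto_pi_nhds.1 (tendsto_pi_nhds.1 hGinf i) j)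
    (fun i j => tendsto_pi_nhds.1 (tendsto_pi_nhds.1 hHinf i) j)
  have haxis (ω : ℝ) : 0 ≤ ((ω : ℂ) * Complex.I).re := by simp
  obtain ⟨c, hc1, hc⟩ := exists_lt_forall_le_of_tendsto_cocompact
    ((continuous_specNorm_evalMatrix_ofReal_mul_I fun i j ω => hGpoles i j _ (haxis ω)).mul
      (continuous_specNorm_evalMatrix_ofReal_mul_I fun i j ω => hHpoles i j _ (haxis ω)))
    hgain hgain_lim
    ((tendsto_specNorm_evalMatrix_ofReal_mul_I hGinf).mul
      (tendsto_specNorm_evalMatrix_ofReal_mul_I hHinf))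
  intro s hs
  refine det_one_add_ne_zero_of_norm_toEuclideanCLM_lt_one (lt_of_le_of_lt ?_ hc1)
  rw [map_mul]
  refine PhragmenLindelof.right_half_plane_of_isBoundedUnder_cobounded
    (f := fun z => toEuclideanCLM (n := Fin N) (𝕜 := ℂ) (evalMatrix H z) *
      toEuclideanCLM (n := Fin N) (𝕜 := ℂ) (evalMatrix G z)) (fun z hz => ?_) ?_ (fun ω => ?_) hs
  · exact (differentiableAt_toEuclideanCLM_evalMatrix (hHpoles · · z hz)).mul
      (differentiableAt_toEuclideanCLM_evalMatrix (hGpoles · · z hz))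
  · exact (((continuous_toEuclideanCLM.tendsto Hinf).comp hHinf).mul
      ((continuous_toEuclideanCLM.tendsto Ginf).comp hGinf)).norm.isBoundedUnder_le
  · exact (norm_mul_le _ _).trans ((mul_comm _ _).trans_le (hc ω))
end

section
/- Matrix small phase lemma: let A and B be complex n×n matrices, and let α₁ ≤ β₁ and α₂ ≤ β₂ be real numbers with β₁ − α₁ < π, β₂ − α₂ < π, β₁ + β₂ < π, and α₁ + α₂ > −π. Suppose that for every nonzero z ∈ ℂ^n, z† A z ∈ { r e^{iθ} : r > 0, θ ∈ [α₁, β₁] } and z† B z ∈ { r e^{iθ} : r > 0, θ ∈ [α₂, β₂] }. Then det(I + A B) ≠ 0. -/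
open Matrix Real ComplexConjugate

/-! If `det (1 + A B) = 0`, pick `z ≠ 0` with `A B z = -z` and put `w = B z`. Then
`w† A w = -(w† z) = -conj (z† B z)`, so `(w† A w) (z† B z) = -|z† B z|²` is a negative real, i.e.
it has phase `π`. But its phase is `θ₁ + θ₂` with `θᵢ` in the two sectors, and
`-π < θ₁ + θ₂ < π`. -/

theorem Matrix.exists_ne_zero_mulVec_mulVec_eq_neg_of_det_one_add_mul_eq_zero
    {ι K : Type*} [Fintype ι] [DecidableEq ι] [CommRing K] [IsDomain K]
    {A B : Matrix ι ι K} (h : (1 + A * B).det = 0) :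
    ∃ z ≠ 0, A *ᵥ (B *ᵥ z) = -z := by
  obtain ⟨z, hz, hABz⟩ := exists_mulVec_eq_zero_iff.2 h
  rw [add_mulVec, one_mulVec, ← mulVec_mulVec] at hABz
  exact ⟨z, hz, eq_neg_of_add_eq_zero_right hABz⟩

theorem Matrix.star_dotProduct_mulVec_eq_neg_star_of_mulVec_mulVec_eq_neg
    {ι R : Type*} [Fintype ι] [NonUnitalRing R] [StarRing R]
    {A B : Matrix ι ι R} {z : ι → R} (h : A *ᵥ (B *ᵥ z) = -z) :
    star (B *ᵥ z) ⬝ᵥ (A *ᵥ (B *ᵥ z)) = -star (star z ⬝ᵥ (B *ᵥ z)) := by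
  rw [h, dotProduct_neg, star_dotProduct]

theorem Complex.ofReal_mul_exp_ne_neg_conj {r₁ r₂ θ₁ θ₂ : ℝ} (hr₁ : 0 < r₁) (hr₂ : 0 < r₂)
    (hgt : -π < θ₁ + θ₂) (hlt : θ₁ + θ₂ < π) :
    (r₁ : ℂ) * exp (θ₁ * I) ≠ -conj ((r₂ : ℂ) * exp (θ₂ * I)) := by
  set b : ℂ := r₂ * exp (θ₂ * I)
  intro h
  have hb : b ≠ 0 := mul_ne_zero (ofReal_ne_zero.2 hr₂.ne') (exp_ne_zero _)
  have hprod : (r₁ : ℂ) * exp (θ₁ * I) * b = ((r₁ * r₂ : ℝ) : ℂ) * exp ((θ₁ + θ₂ : ℝ) * I) := by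
    push_cast
    rw [add_mul, exp_add]
    ring
  have harg : arg ((r₁ : ℂ) * exp (θ₁ * I) * b) = θ₁ + θ₂ := by
    rw [hprod, arg_real_mul _ (mul_pos hr₁ hr₂), arg_exp_mul_I,
      toIocMod_eq_self _ |>.2 ⟨hgt, by linarith⟩]
  have hneg : (r₁ : ℂ) * exp (θ₁ * I) * b = ((-normSq b : ℝ) : ℂ) := by
    rw [h, neg_mul, mul_comm, mul_conj, ofReal_neg]
  rw [hneg, arg_ofReal_of_neg (neg_neg_of_pos (normSq_pos.2 hb))] at harg
  linarith

theorem matrix_small_phase_lemma_general {n : ℕ} (A B : Matrix (Fin n) (Fin n) ℂ)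
    (α₁ β₁ α₂ β₂ : ℝ)
    (hsum₁ : β₁ + β₂ < π) (hsum₂ : -π < α₁ + α₂)
    (hA : ∀ z : Fin n → ℂ, z ≠ 0 → ∃ r θ : ℝ, 0 < r ∧ θ ∈ Set.Icc α₁ β₁ ∧
      star z ⬝ᵥ (A *ᵥ z) = (r : ℂ) * Complex.exp ((θ : ℂ) * Complex.I))
    (hB : ∀ z : Fin n → ℂ, z ≠ 0 → ∃ r θ : ℝ, 0 < r ∧ θ ∈ Set.Icc α₂ β₂ ∧
      star z ⬝ᵥ (B *ᵥ z) = (r : ℂ) * Complex.exp ((θ : ℂ) * Complex.I)) :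
    (1 + A * B).det ≠ 0 := by
  intro hdet
  obtain ⟨z, hz, hABz⟩ := exists_ne_zero_mulVec_mulVec_eq_neg_of_det_one_add_mul_eq_zero hdet
  have hBz : B *ᵥ z ≠ 0 := fun h ↦ hz (by simpa [h] using hABz.symm)
  obtain ⟨r₁, θ₁, hr₁, hθ₁, hwAw⟩ := hA _ hBz
  obtain ⟨r₂, θ₂, hr₂, hθ₂, hzBz⟩ := hB z hz
  have hphase := star_dotProduct_mulVec_eq_neg_star_of_mulVec_mulVec_eq_neg hABz
  rw [hwAw, hzBz, Complex.star_def] at hphase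
  exact Complex.ofReal_mul_exp_ne_neg_conj (θ₁ := θ₁) (θ₂ := θ₂) hr₁ hr₂
    (by linarith [hθ₁.1, hθ₂.1]) (by linarith [hθ₁.2, hθ₂.2]) hphase

/-- Matrix small phase lemma.  If `A` and `B` are sectorial with
phase sectors `[α₁, β₁]` and `[α₂, β₂]` of width less than `π`, and
`β₁ + β₂ < π`, `α₁ + α₂ > -π`, then `det (I + A B) ≠ 0`. -/
theorem matrix_small_phase_lemma {n : ℕ} (A B : Matrix (Fin n) (Fin n) ℂ)
    (α₁ β₁ α₂ β₂ : ℝ) (h₁ : α₁ ≤ β₁) (h₂ : α₂ ≤ β₂)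
    (hw₁ : β₁ - α₁ < π) (hw₂ : β₂ - α₂ < π)
    (hsum₁ : β₁ + β₂ < π) (hsum₂ : -π < α₁ + α₂)
    (hA : ∀ z : Fin n → ℂ, z ≠ 0 → ∃ r θ : ℝ, 0 < r ∧ θ ∈ Set.Icc α₁ β₁ ∧
      star z ⬝ᵥ (A *ᵥ z) = (r : ℂ) * Complex.exp ((θ : ℂ) * Complex.I))
    (hB : ∀ z : Fin n → ℂ, z ≠ 0 → ∃ r θ : ℝ, 0 < r ∧ θ ∈ Set.Icc α₂ β₂ ∧
      star z ⬝ᵥ (B *ᵥ z) = (r : ℂ) * Complex.exp ((θ : ℂ) * Complex.I)) :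
    (1 + A * B).det ≠ 0 :=
  matrix_small_phase_lemma_general A B α₁ β₁ α₂ β₂ hsum₁ hsum₂ hA hB
end

section
/- Phase bound for products of sectorial matrices: let A and B be complex n×n matrices, and let α₁ ≤ β₁ and α₂ ≤ β₂ be real numbers with β₁ − α₁ < π and β₂ − α₂ < π. Suppose that for every nonzero z ∈ ℂ^n, z† A z ∈ { r e^{iθ} : r > 0, θ ∈ [α₁, β₁] } and z† B z ∈ { r e^{iθ} : r > 0, θ ∈ [α₂, β₂] }. Then every eigenvalue λ of the product A B is nonzero and lies in the sector { r e^{iθ} : r > 0, θ ∈ [α₁ + α₂, β₁ + β₂] }. -/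
open Matrix Real

/-! If `(A B) z = μ z` with `z ≠ 0`, put `w = B z`. Then
`w† A w = μ (w† z) = μ · conj (z† B z)`, so `w ≠ 0` and
`μ = (w† A w) / conj (z† B z)`. The numerator has phase in `[α₁, β₁]`, and dividing by the
conjugate of a number with phase in `[α₂, β₂]` adds that phase, so `μ` has phase in
`[α₁ + α₂, β₁ + β₂]`. -/

def InSector (a b : ℝ) (x : ℂ) : Prop :=
  ∃ r θ : ℝ, 0 < r ∧ θ ∈ Set.Icc a b ∧ x = (r : ℂ) * Complex.exp ((θ : ℂ) * Complex.I)

namespace InSector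

variable {a b c d : ℝ} {x y : ℂ}

theorem ne_zero (hx : InSector a b x) : x ≠ 0 := by
  obtain ⟨r, θ, hr, -, rfl⟩ := hx
  exact mul_ne_zero (Complex.ofReal_ne_zero.mpr hr.ne') (Complex.exp_ne_zero _)

theorem mul (hx : InSector a b x) (hy : InSector c d y) : InSector (a + c) (b + d) (x * y) := by
  obtain ⟨r, θ, hr, hθ, rfl⟩ := hx
  obtain ⟨s, φ, hs, hφ, rfl⟩ := hy
  refine ⟨r * s, θ + φ, mul_pos hr hs, ⟨add_le_add hθ.1 hφ.1, add_le_add hθ.2 hφ.2⟩, ?_⟩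
  push_cast
  rw [add_mul, Complex.exp_add]
  ring

theorem conj_inv (hx : InSector a b x) : InSector a b (starRingEnd ℂ x)⁻¹ := by
  obtain ⟨r, θ, hr, hθ, rfl⟩ := hx
  refine ⟨r⁻¹, θ, inv_pos.mpr hr, hθ, ?_⟩
  rw [map_mul, Complex.conj_ofReal, ← Complex.exp_conj, map_mul, Complex.conj_ofReal,
    Complex.conj_I, mul_neg, Complex.exp_neg, mul_inv, inv_inv, Complex.ofReal_inv]

end InSector

theorem Matrix.star_mulVec_dotProduct_mulVec_mulVec_of_mul_mulVec_eq_smul {ι R : Type*}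
    [Fintype ι] [CommRing R] [StarRing R] {A B : Matrix ι ι R} {z : ι → R} {μ : R}
    (h : (A * B) *ᵥ z = μ • z) :
    star (B *ᵥ z) ⬝ᵥ (A *ᵥ (B *ᵥ z)) = μ * star (star z ⬝ᵥ (B *ᵥ z)) := by
  rw [mulVec_mulVec, h, dotProduct_smul, smul_eq_mul, star_dotProduct]

theorem eigenvalue_product_sector_general {n : ℕ} (A B : Matrix (Fin n) (Fin n) ℂ)
    (α₁ β₁ α₂ β₂ : ℝ)
    (hA : ∀ z : Fin n → ℂ, z ≠ 0 → ∃ r θ : ℝ, 0 < r ∧ θ ∈ Set.Icc α₁ β₁ ∧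
      star z ⬝ᵥ (A *ᵥ z) = (r : ℂ) * Complex.exp ((θ : ℂ) * Complex.I))
    (hB : ∀ z : Fin n → ℂ, z ≠ 0 → ∃ r θ : ℝ, 0 < r ∧ θ ∈ Set.Icc α₂ β₂ ∧
      star z ⬝ᵥ (B *ᵥ z) = (r : ℂ) * Complex.exp ((θ : ℂ) * Complex.I)) :
    ∀ (μ : ℂ) (z : Fin n → ℂ), z ≠ 0 → (A * B) *ᵥ z = μ • z →
      μ ≠ 0 ∧ ∃ r θ : ℝ, 0 < r ∧ θ ∈ Set.Icc (α₁ + α₂) (β₁ + β₂) ∧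
        μ = (r : ℂ) * Complex.exp ((θ : ℂ) * Complex.I) := by
  intro μ z hz heig
  have hzBz : InSector α₂ β₂ (star z ⬝ᵥ (B *ᵥ z)) := hB z hz
  have hBz : B *ᵥ z ≠ 0 := fun h => hzBz.ne_zero (by rw [h, dotProduct_zero])
  have hwAw : InSector α₁ β₁ (star (B *ᵥ z) ⬝ᵥ (A *ᵥ (B *ᵥ z))) := hA _ hBz
  have hμ_eq :
      μ = star (B *ᵥ z) ⬝ᵥ (A *ᵥ (B *ᵥ z)) * (starRingEnd ℂ (star z ⬝ᵥ (B *ᵥ z)))⁻¹ := by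
    rw [star_mulVec_dotProduct_mulVec_mulVec_of_mul_mulVec_eq_smul heig, Complex.star_def,
      mul_inv_cancel_right₀ ((map_ne_zero _).mpr hzBz.ne_zero)]
  have hμ : InSector (α₁ + α₂) (β₁ + β₂) μ := hμ_eq ▸ hwAw.mul hzBz.conj_inv
  exact ⟨hμ.ne_zero, hμ⟩

/-- Phase bound for products of sectorial matrices.  If `A` and
`B` are sectorial with phase sectors `[α₁, β₁]` and `[α₂, β₂]` of width less
than `π`, then every eigenvalue of `A B` is nonzero and lies in the sector
`{ r e^{iθ} : r > 0, θ ∈ [α₁ + α₂, β₁ + β₂] }`. -/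
theorem eigenvalue_product_sector {n : ℕ} (A B : Matrix (Fin n) (Fin n) ℂ)
    (α₁ β₁ α₂ β₂ : ℝ) (h₁ : α₁ ≤ β₁) (h₂ : α₂ ≤ β₂)
    (hw₁ : β₁ - α₁ < π) (hw₂ : β₂ - α₂ < π)
    (hA : ∀ z : Fin n → ℂ, z ≠ 0 → ∃ r θ : ℝ, 0 < r ∧ θ ∈ Set.Icc α₁ β₁ ∧
      star z ⬝ᵥ (A *ᵥ z) = (r : ℂ) * Complex.exp ((θ : ℂ) * Complex.I))
    (hB : ∀ z : Fin n → ℂ, z ≠ 0 → ∃ r θ : ℝ, 0 < r ∧ θ ∈ Set.Icc α₂ β₂ ∧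
      star z ⬝ᵥ (B *ᵥ z) = (r : ℂ) * Complex.exp ((θ : ℂ) * Complex.I)) :
    ∀ (μ : ℂ) (z : Fin n → ℂ), z ≠ 0 → (A * B) *ᵥ z = μ • z →
      μ ≠ 0 ∧ ∃ r θ : ℝ, 0 < r ∧ θ ∈ Set.Icc (α₁ + α₂) (β₁ + β₂) ∧
        μ = (r : ℂ) * Complex.exp ((θ : ℂ) * Complex.I) :=
  eigenvalue_product_sector_general A B α₁ β₁ α₂ β₂ hA hB
end
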